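/- arXiv:2009.01156 — 2 statements merged into one kernel-verified Lean document; each statement's English description precedes it below -/
import Mathlib

section
/- Fix an integer L ≥ 3 and a positive integer r. There exists e* ∈ (0,1), depending only on L and r, such that for every N ∈ ℕ, every bare coupling e ∈ (0, e*], and every k with 0 ≤ k < N, the scale parameters satisfy r_{k+1} = r_k or L·r_{k+1} = r_k (i.e., r_k decreases at each step by at most one power of L). -/
/-!
Passing from `k + 1` to `k` multiplies the running coupling by `L^{-1/2}`, so
`x := log (1 / e_{k+1})` grows to `x + log L / 2`. Since `x ≥ log (1 / e)` is large for small `e`,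
`x ^ r ≤ (x + log L / 2) ^ r ≤ L * x ^ r`, and the least powers of `L` dominating two numbers
whose ratio lies in `[1, L]` differ by at most one factor of `L`.
-/

/-- The running coupling `e_k = L^{-(N-k)/2} · e`. -/
noncomputable def runCoupling (L : ℕ) (e : ℝ) (N k : ℕ) : ℝ :=
  (L : ℝ) ^ (-(((N : ℝ) - (k : ℝ)) / 2)) * e

/-- The scale parameter `r_k`: the smallest power of `L` that is at least
`(log(1/e_k))^r`. -/
noncomputable def scaleParam (L r : ℕ) (e : ℝ) (N k : ℕ) : ℕ :=
  sInf {p : ℕ | (∃ n : ℕ, p = L ^ n) ∧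
    (Real.log (1 / runCoupling L e N k)) ^ r ≤ (p : ℝ)}

noncomputable def powCeil (L : ℕ) (x : ℝ) : ℕ :=
  sInf {p : ℕ | (∃ n : ℕ, p = L ^ n) ∧ x ≤ (p : ℝ)}

theorem scaleParam_eq_powCeil (L r : ℕ) (e : ℝ) (N k : ℕ) :
    scaleParam L r e N k = powCeil L (Real.log (1 / runCoupling L e N k) ^ r) :=
  rfl

section powCeil

variable {L : ℕ} {x y : ℝ}

theorem powCeil_le_pow {n : ℕ} (h : x ≤ (L : ℝ) ^ n) : powCeil L x ≤ L ^ n :=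
  Nat.sInf_le ⟨⟨n, rfl⟩, by exact_mod_cast h⟩

theorem powCeil_spec (hL : 1 < L) (x : ℝ) :
    (∃ n : ℕ, powCeil L x = L ^ n) ∧ x ≤ (powCeil L x : ℝ) := by
  obtain ⟨n, hn⟩ := pow_unbounded_of_one_lt x (by exact_mod_cast hL : (1 : ℝ) < L)
  exact Nat.sInf_mem (s := {p : ℕ | (∃ n : ℕ, p = L ^ n) ∧ x ≤ (p : ℝ)})
    ⟨L ^ n, ⟨n, rfl⟩, by exact_mod_cast hn.le⟩

theorem powCeil_mono (hL : 1 < L) (hxy : x ≤ y) : powCeil L x ≤ powCeil L y := by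
  obtain ⟨⟨n, hn⟩, hy⟩ := powCeil_spec hL y
  rw [hn] at hy ⊢
  exact powCeil_le_pow (hxy.trans (by exact_mod_cast hy))

theorem powCeil_le_mul_powCeil (hL : 1 < L) (hxy : x ≤ L * y) :
    powCeil L x ≤ L * powCeil L y := by
  obtain ⟨⟨n, hn⟩, hy⟩ := powCeil_spec hL y
  rw [hn] at hy ⊢
  rw [← pow_succ']
  refine powCeil_le_pow (hxy.trans ?_)
  rw [pow_succ']
  gcongr
  exact_mod_cast hy

theorem pow_eq_or_eq_mul_of_le_of_le_mul (hL : 1 < L) {a b : ℕ} (hba : L ^ b ≤ L ^ a)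
    (hab : L ^ a ≤ L * L ^ b) : L ^ a = L ^ b ∨ L ^ a = L * L ^ b := by
  rw [← pow_succ'] at hab ⊢
  rw [Nat.pow_le_pow_iff_right hL] at hba hab
  obtain h | h : a = b ∨ a = b + 1 := by omega
  exacts [Or.inl (congrArg _ h), Or.inr (congrArg _ h)]

theorem powCeil_eq_or_eq_mul (hL : 1 < L) (hyx : y ≤ x) (hxy : x ≤ L * y) :
    powCeil L x = powCeil L y ∨ powCeil L x = L * powCeil L y := by
  obtain ⟨a, ha⟩ := (powCeil_spec hL x).1
  obtain ⟨b, hb⟩ := (powCeil_spec hL y).1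
  have hba := powCeil_mono hL hyx
  have hab := powCeil_le_mul_powCeil hL hxy
  rw [ha, hb] at hba hab ⊢
  exact pow_eq_or_eq_mul_of_le_of_le_mul hL hba hab

end powCeil

theorem pow_le_mul_pow_of_le_rpow_inv_mul {L x y : ℝ} {r : ℕ} (hL : 0 ≤ L) (hr : r ≠ 0)
    (hy : 0 ≤ y) (h : y ≤ L ^ (r⁻¹ : ℝ) * x) : y ^ r ≤ L * x ^ r :=
  calc y ^ r ≤ (L ^ (r⁻¹ : ℝ) * x) ^ r := pow_le_pow_left₀ hy h r
    _ = L * x ^ r := by rw [mul_pow, Real.rpow_inv_natCast_pow hL hr]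

section runCoupling

variable {L : ℕ} {e : ℝ}

theorem log_inv_runCoupling (hL : 0 < L) (he : e ≠ 0) (N k : ℕ) :
    Real.log (1 / runCoupling L e N k) = ((N : ℝ) - k) / 2 * Real.log L - Real.log e := by
  have hL' : (0 : ℝ) < L := by exact_mod_cast hL
  rw [runCoupling, one_div, Real.log_inv, Real.log_mul (Real.rpow_pos_of_pos hL' _).ne' he,
    Real.log_rpow hL']
  ring

theorem log_inv_runCoupling_eq_add (hL : 0 < L) (he : e ≠ 0) (N k : ℕ) :
    Real.log (1 / runCoupling L e N k) =
      Real.log (1 / runCoupling L e N (k + 1)) + Real.log L / 2 := by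
  rw [log_inv_runCoupling hL he, log_inv_runCoupling hL he]
  push_cast
  ring

theorem neg_log_le_log_inv_runCoupling (hL : 0 < L) (he : e ≠ 0) {N k : ℕ} (hk : k ≤ N) :
    -Real.log e ≤ Real.log (1 / runCoupling L e N k) := by
  rw [log_inv_runCoupling hL he]
  have hNk : (k : ℝ) ≤ N := by exact_mod_cast hk
  have hlogL : 0 ≤ Real.log L := Real.log_natCast_nonneg L
  nlinarith

end runCoupling

/-- Lemma 4.1(1): for sufficiently small coupling, the scale parameters `r_k`
decrease at each step by at most one power of `L`. -/
theorem scaleParam_step (L : ℕ) (hL : 3 ≤ L) (r : ℕ) (hr : 0 < r) :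
    ∃ estar : ℝ, 0 < estar ∧ estar < 1 ∧
      ∀ (N : ℕ) (e : ℝ), 0 < e → e ≤ estar → ∀ k : ℕ, k < N →
        scaleParam L r e N (k + 1) = scaleParam L r e N k ∨
        L * scaleParam L r e N (k + 1) = scaleParam L r e N k := by
  have hL1 : 1 < L := by omega
  have hL1' : (1 : ℝ) < L := by exact_mod_cast hL1
  set c := Real.log L / 2
  set D := (L : ℝ) ^ (r⁻¹ : ℝ) - 1
  have hc : 0 < c := half_pos (Real.log_pos hL1')
  have hD : 0 < D := sub_pos.2 (Real.one_lt_rpow hL1' (by positivity))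
  refine ⟨Real.exp (-(c / D)), Real.exp_pos _,
    Real.exp_lt_one_iff.2 (neg_neg_of_pos (div_pos hc hD)), ?_⟩
  intro N e he hee k hk
  set X := Real.log (1 / runCoupling L e N (k + 1))
  have hXk := log_inv_runCoupling_eq_add (L := L) (by omega) he.ne' N k
  have hXc : c / D ≤ X :=
    calc c / D ≤ -Real.log e := le_neg.1 (by simpa using Real.log_le_log he hee)
      _ ≤ X := neg_log_le_log_inv_runCoupling (by omega) he.ne' hk
  have hX : 0 ≤ X := (div_pos hc hD).le.trans hXc
  have hXcX : X + c ≤ (L : ℝ) ^ (r⁻¹ : ℝ) * X := by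
    have := (div_le_iff₀ hD).1 hXc
    linarith
  rw [scaleParam_eq_powCeil, scaleParam_eq_powCeil, hXk]
  rcases powCeil_eq_or_eq_mul hL1 (pow_le_pow_left₀ hX (le_add_of_nonneg_right hc.le) r)
    (pow_le_mul_pow_of_le_rpow_inv_mul (by positivity) hr.ne' (by positivity) hXcX) with h | h
  exacts [Or.inl h.symm, Or.inr h.symm]
end

section
/- Fix an integer L ≥ 3 and positive integers r and m, and set M = L^m. There exists e* ∈ (0,1), depending only on L and r, such that for every e ∈ (0, e*] there is N₀ ∈ ℕ (depending on L, m, r, e) with the property: for every N ≥ N₀ there exists an integer K with 0 ≤ K < N and M·r_K = L^{N−K} (so the iteration can be stopped exactly when the torus with L^{N−K} sites on a side consists of a single block of side M·r_K). -/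
noncomputable def leastPowGe (L : ℕ) (x : ℝ) : ℕ :=
  sInf {p : ℕ | (∃ n : ℕ, p = L ^ n) ∧ x ≤ (p : ℝ)}

theorem leastPowGe_eq_pow {L n : ℕ} {x : ℝ} (hL : 1 < L) (hx : x ≤ (L : ℝ) ^ n)
    (hlt : ∀ k < n, (L : ℝ) ^ k < x) : leastPowGe L x = L ^ n := by
  have hmem : L ^ n ∈ {p : ℕ | (∃ n : ℕ, p = L ^ n) ∧ x ≤ (p : ℝ)} :=
    ⟨⟨n, rfl⟩, by exact_mod_cast hx⟩
  refine le_antisymm (Nat.sInf_le hmem) (le_csInf ⟨_, hmem⟩ ?_)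
  rintro _ ⟨⟨k, rfl⟩, hk⟩
  refine Nat.pow_le_pow_right (by omega) (not_lt.mp fun hkn => ?_)
  exact (hlt k hkn).not_ge (by exact_mod_cast hk)

theorem exists_pos_pow_mul_leastPowGe_eq_pow {L m : ℕ} (hL : 1 < L) (hm : 0 < m) {f : ℕ → ℝ}
    (hf : Monotone f) (hf0 : 1 ≤ f 0) (hex : ∃ j, (L : ℝ) ^ m * f j ≤ (L : ℝ) ^ j) :
    ∃ j, 0 < j ∧ L ^ m * leastPowGe L (f j) = L ^ j := by
  classical
  have hL1 : (1 : ℝ) < L := by exact_mod_cast hL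
  set j := Nat.find hex
  have hj : (L : ℝ) ^ m * f j ≤ (L : ℝ) ^ j := Nat.find_spec hex
  have hfj : 1 ≤ f j := hf0.trans (hf (Nat.zero_le j))
  have hLm : (1 : ℝ) < (L : ℝ) ^ m := one_lt_pow₀ hL1 hm.ne'
  have hj0 : 0 < j := Nat.pos_of_ne_zero fun h0 => by
    have : (L : ℝ) ^ m * f 0 ≤ 1 := by simpa [h0] using hj
    nlinarith
  have hmj : m ≤ j := by
    refine (pow_le_pow_iff_right₀ hL1).mp ?_
    nlinarith
  have hsplit : ∀ k, m ≤ k → (L : ℝ) ^ k = (L : ℝ) ^ m * (L : ℝ) ^ (k - m) := fun k hk => by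
    rw [← pow_add, Nat.add_sub_cancel' hk]
  have hupper : f j ≤ (L : ℝ) ^ (j - m) := by
    rw [hsplit j hmj] at hj
    exact le_of_mul_le_mul_left hj (by positivity)
  have hlower : ∀ k < j - m, (L : ℝ) ^ k < f j := by
    intro k hk
    have hprev : (L : ℝ) ^ (j - 1) < (L : ℝ) ^ m * f (j - 1) :=
      not_le.mp (Nat.find_min hex (by omega))
    rw [hsplit (j - 1) (by omega)] at hprev
    calc (L : ℝ) ^ k ≤ (L : ℝ) ^ (j - 1 - m) := pow_le_pow_right₀ hL1.le (by omega)
      _ < f (j - 1) := lt_of_mul_lt_mul_left hprev (by positivity)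
      _ ≤ f j := hf (Nat.sub_le j 1)
  refine ⟨j, hj0, ?_⟩
  rw [leastPowGe_eq_pow hL hupper hlower, ← pow_add, Nat.add_sub_cancel' hmj]

theorem eventually_mul_linear_pow_le_pow {L : ℝ} (hL : 1 < L) (c a b : ℝ) (r : ℕ) :
    ∀ᶠ j : ℕ in Filter.atTop, c * (b * j + a) ^ r ≤ L ^ j := by
  have hlin : (fun j : ℕ => b * (j : ℝ) + a) =O[Filter.atTop] (fun j : ℕ => (j : ℝ)) :=
    (Asymptotics.isBigO_const_mul_self b _ _).add
      ((Asymptotics.isLittleO_const_id_atTop a).isBigO.comp_tendsto tendsto_natCast_atTop_atTop)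
  have hlo := ((hlin.pow r).trans_isLittleO
    (isLittleO_pow_const_const_pow_of_one_lt r hL)).const_mul_left c
  filter_upwards [hlo.bound one_pos] with j hj
  rw [one_mul, Real.norm_eq_abs, Real.norm_of_nonneg (by positivity)] at hj
  exact (le_abs_self _).trans hj

theorem log_one_div_runCoupling {L : ℕ} (hL : 0 < L) {e : ℝ} (he : 0 < e) (N k : ℕ) :
    Real.log (1 / runCoupling L e N k) = Real.log L / 2 * ((N : ℝ) - k) + Real.log (1 / e) := by
  have hL' : (0 : ℝ) < L := by exact_mod_cast hL
  rw [runCoupling, one_div, Real.log_inv, Real.log_mul (by positivity) he.ne', Real.log_rpow hL',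
    one_div, Real.log_inv]
  ring

theorem exists_stop_index_general (L : ℕ) (hL : 3 ≤ L) (r m : ℕ) (hm : 0 < m) :
    ∃ estar : ℝ, 0 < estar ∧ estar < 1 ∧
      ∀ e : ℝ, 0 < e → e ≤ estar →
        ∃ N₀ : ℕ, ∀ N : ℕ, N₀ ≤ N →
          ∃ K : ℕ, K < N ∧ L ^ m * scaleParam L r e N K = L ^ (N - K) := by
  have hL1 : (1 : ℝ) < L := by exact_mod_cast (show 1 < L by omega)
  refine ⟨Real.exp (-1), Real.exp_pos _, Real.exp_lt_one_iff.mpr (by norm_num), fun e he hee => ?_⟩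
  have hA : 1 ≤ Real.log (1 / e) := by
    rw [one_div, Real.log_inv, le_neg, ← Real.log_exp (-1)]
    exact Real.log_le_log he hee
  set g : ℕ → ℝ := fun j => Real.log L / 2 * j + Real.log (1 / e)
  have hg : Monotone g := fun i j hij => by
    simp only [g]
    gcongr
  have hex : ∃ j, (L : ℝ) ^ m * g j ^ r ≤ (L : ℝ) ^ j :=
    (eventually_mul_linear_pow_le_pow hL1 _ _ _ r).exists
  obtain ⟨j, hj0, hj⟩ := exists_pos_pow_mul_leastPowGe_eq_pow (by omega) hm
    (fun i k hik => pow_le_pow_left₀ (by simp only [g]; positivity) (hg hik) r)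
    (one_le_pow₀ (by simpa [g] using hA)) hex
  refine ⟨j, fun N hN => ⟨N - j, by omega, ?_⟩⟩
  have hscale : scaleParam L r e N (N - j) = leastPowGe L (g j ^ r) := by
    rw [scaleParam, log_one_div_runCoupling (by omega) he, Nat.cast_sub hN, sub_sub_cancel]
    rfl
  rw [hscale, hj, Nat.sub_sub_self hN]

/-- Lemma 4.1(2): for sufficiently small coupling and `N` large enough, there is
an index `K < N` with `M · r_K = L^(N-K)`, where `M = L^m`. -/
theorem exists_stop_index (L : ℕ) (hL : 3 ≤ L) (r m : ℕ) (hr : 0 < r) (hm : 0 < m) :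
    ∃ estar : ℝ, 0 < estar ∧ estar < 1 ∧
      ∀ e : ℝ, 0 < e → e ≤ estar →
        ∃ N₀ : ℕ, ∀ N : ℕ, N₀ ≤ N →
          ∃ K : ℕ, K < N ∧ L ^ m * scaleParam L r e N K = L ^ (N - K) :=
  exists_stop_index_general L hL r m hm
end
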